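/- If m ≥ 4, then β(Φ(X1X2X3⋯Xm)) = X1X2 · β(Φ(X3⋯Xm)) in Sym^m(H) for all X1, …, Xm ∈ H, where on the right-hand side X1X2 multiplies the element β(Φ(X3⋯Xm)) ∈ Sym^{m−2}(H) inside the symmetric algebra Sym(H). (The paper states this for m ≥ 3; the hypothesis m ≥ 4 ensures the tail Φ(X3⋯Xm) has length at least 2, which the proof uses.) -/
import Mathlib


noncomputable section

variable {H : Type*} [AddCommGroup H] [Module ℚ H]

/-- The pure tensor `X1 ⊗ ⋯ ⊗ Xm`, as the element `ι(X1)⋯ι(Xm)` of the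
tensor algebra `T(H)`. -/
def word (l : List H) : TensorAlgebra ℚ H :=
  (l.map fun x => TensorAlgebra.ι ℚ x).prod

/-- The Dynkin map `Φ(X1 X2 ⋯ Xm) = [X1,[X2,[⋯,[X_{m−1},Xm]⋯]]]`, with
`[a,b] := ab − ba` the commutator in `T(H)` and `Φ(X1) = X1`. -/
def dynkin : List H → TensorAlgebra ℚ H
  | [] => 0
  | [x] => TensorAlgebra.ι ℚ x
  | x :: y :: l =>
      TensorAlgebra.ι ℚ x * dynkin (y :: l) - dynkin (y :: l) * TensorAlgebra.ι ℚ x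

variable {A : Type*} [CommRing A] [Algebra ℚ A]

/-- The monomial `X1 X2 ⋯ Xm` in the symmetric algebra `Sym(H)`, modelled by a
commutative `ℚ`-algebra `A` equipped with a linear map `σ : H → A`. -/
def symword (σ : H →ₗ[ℚ] A) (l : List H) : A := (l.map fun x => σ x).prod

/-- `β = β_{Y,Z} : H^{⊗m} → Sym^m(H)` (for every `m ≥ 2` simultaneously) is the
linear map determined on pure tensors by
`β(X1⋯Xm) = −(Y·X1)·Z X2⋯Xm − (Y·Xm)·Z X1⋯X_{m−1} + (Z·X1)·Y X2⋯Xm + (Z·Xm)·Y X1⋯X_{m−1}`. -/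
def IsBeta (ω : H →ₗ[ℚ] H →ₗ[ℚ] ℚ) (σ : H →ₗ[ℚ] A) (Y Z : H)
    (β : TensorAlgebra ℚ H →ₗ[ℚ] A) : Prop :=
  ∀ (x z : H) (mid : List H),
    β (word (x :: (mid ++ [z]))) =
      -((ω Y x) • (σ Z * symword σ (mid ++ [z])))
        - (ω Y z) • (σ Z * symword σ (x :: mid))
        + (ω Z x) • (σ Y * symword σ (mid ++ [z]))
        + (ω Z z) • (σ Y * symword σ (x :: mid))

/-- `γ = γ_{Y,Z} : H^{⊗m} → Sym^m(H)` (for every `m ≥ 3` simultaneously) is the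
linear map determined on pure tensors by
`γ(X1⋯Xm) = −(Y·X2)·Z X1X3⋯Xm − (Y·X_{m−1})·Z X1⋯X_{m−2}Xm + (Z·X2)·Y X1X3⋯Xm + (Z·X_{m−1})·Y X1⋯X_{m−2}Xm`
(for `m = 3` the positions `2` and `m−1` coincide, so the corresponding terms add up). -/
def IsGamma (ω : H →ₗ[ℚ] H →ₗ[ℚ] ℚ) (σ : H →ₗ[ℚ] A) (Y Z : H)
    (γ : TensorAlgebra ℚ H →ₗ[ℚ] A) : Prop :=
  (∀ a b c : H,
    γ (word [a, b, c]) =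
      -((ω Y b) • (σ Z * symword σ [a, c]))
        - (ω Y b) • (σ Z * symword σ [a, c])
        + (ω Z b) • (σ Y * symword σ [a, c])
        + (ω Z b) • (σ Y * symword σ [a, c])) ∧
  (∀ (a b : H) (mid : List H) (c d : H),
    γ (word (a :: b :: (mid ++ [c, d]))) =
      -((ω Y b) • (σ Z * symword σ (a :: (mid ++ [c, d]))))
        - (ω Y c) • (σ Z * symword σ (a :: b :: (mid ++ [d])))
        + (ω Z b) • (σ Y * symword σ (a :: (mid ++ [c, d])))
        + (ω Z c) • (σ Y * symword σ (a :: b :: (mid ++ [d]))))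

-- auxiliary lemmas

lemma word_nil : (word ([] : List H)) = 1 := rfl

lemma word_cons (x : H) (l : List H) :
    word (x :: l) = TensorAlgebra.ι ℚ x * word l := by
  simp [word]

lemma word_singleton (x : H) : word [x] = TensorAlgebra.ι ℚ x := by
  simp [word]

lemma word_append (l1 l2 : List H) : word (l1 ++ l2) = word l1 * word l2 := by
  simp [word]

lemma symword_nil (σ : H →ₗ[ℚ] A) : symword σ ([] : List H) = 1 := rfl

lemma symword_cons (σ : H →ₗ[ℚ] A) (x : H) (l : List H) :
    symword σ (x :: l) = σ x * symword σ l := by simp [symword]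

lemma symword_singleton (σ : H →ₗ[ℚ] A) (x : H) : symword σ [x] = σ x := by
  simp [symword]

lemma symword_append (σ : H →ₗ[ℚ] A) (l1 l2 : List H) :
    symword σ (l1 ++ l2) = symword σ l1 * symword σ l2 := by simp [symword]

lemma Sym_word (σ : H →ₗ[ℚ] A) (l : List H) :
    TensorAlgebra.lift ℚ σ (word l) = symword σ l := by
  induction l with
  | nil => simp [word, symword]
  | cons x t ih => simp [word_cons, symword_cons, ih, TensorAlgebra.lift_ι_apply]

lemma dynkin_cons (x y : H) (t : List H) :
    dynkin (x :: y :: t) =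
      TensorAlgebra.ι ℚ x * dynkin (y :: t) - dynkin (y :: t) * TensorAlgebra.ι ℚ x := rfl

lemma Sym_dynkin_zero (σ : H →ₗ[ℚ] A) (x y : H) (t : List H) :
    TensorAlgebra.lift ℚ σ (dynkin (x :: y :: t)) = 0 := by
  rw [dynkin_cons, map_sub, map_mul, map_mul, mul_comm, sub_self]

def W2 : Set (TensorAlgebra ℚ H) :=
  {u | ∃ (a : H) (mid : List H) (c : H), u = word (a :: (mid ++ [c]))}

lemma word_mul_ι (l : List H) (x : H) :
    word l * TensorAlgebra.ι ℚ x = word (l ++ [x]) := by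
  rw [word_append, word_singleton]

lemma comm_mem_span (x : H) {u : TensorAlgebra ℚ H}
    (hu : u ∈ Submodule.span ℚ (W2 (H := H))) :
    TensorAlgebra.ι ℚ x * u - u * TensorAlgebra.ι ℚ x ∈ Submodule.span ℚ (W2 (H := H)) := by
  induction hu using Submodule.span_induction with
  | mem u hu =>
    obtain ⟨a, mid, c, rfl⟩ := hu
    refine sub_mem ?_ ?_
    · refine Submodule.subset_span ⟨x, a :: mid, c, ?_⟩
      simp [word_cons]
    · refine Submodule.subset_span ⟨a, mid ++ [c], x, ?_⟩
      rw [word_mul_ι]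
      congr 1
  | zero => simp
  | add u v hu hv ihu ihv =>
    have : TensorAlgebra.ι ℚ x * (u + v) - (u + v) * TensorAlgebra.ι ℚ x =
        (TensorAlgebra.ι ℚ x * u - u * TensorAlgebra.ι ℚ x)
        + (TensorAlgebra.ι ℚ x * v - v * TensorAlgebra.ι ℚ x) := by noncomm_ring
    rw [this]; exact add_mem ihu ihv
  | smul q u hu ihu =>
    have : TensorAlgebra.ι ℚ x * (q • u) - (q • u) * TensorAlgebra.ι ℚ x =
        q • (TensorAlgebra.ι ℚ x * u - u * TensorAlgebra.ι ℚ x) := by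
      rw [mul_smul_comm, smul_mul_assoc, smul_sub]
    rw [this]; exact Submodule.smul_mem _ _ ihu

lemma dynkin_mem_span : ∀ (t : List H) (a b : H),
    dynkin (a :: b :: t) ∈ Submodule.span ℚ (W2 (H := H)) := by
  intro t
  induction t with
  | nil =>
    intro a b
    have h : dynkin [a, b] = word (a :: ([] ++ [b])) - word (b :: ([] ++ [a])) := by
      simp [dynkin, word]
    rw [h]
    exact sub_mem (Submodule.subset_span ⟨a, [], b, rfl⟩)
      (Submodule.subset_span ⟨b, [], a, rfl⟩)
  | cons c t ih =>
    intro a b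
    rw [dynkin_cons]
    exact comm_mem_span a (ih b c)

section Key

variable (ω : H →ₗ[ℚ] H →ₗ[ℚ] ℚ) (σ : H →ₗ[ℚ] A) (Y Z : H)
  (β : TensorAlgebra ℚ H →ₗ[ℚ] A)

def commL (x : H) : TensorAlgebra ℚ H →ₗ[ℚ] TensorAlgebra ℚ H :=
  LinearMap.mulLeft ℚ (TensorAlgebra.ι ℚ x) - LinearMap.mulRight ℚ (TensorAlgebra.ι ℚ x)

lemma commL_apply (x : H) (u : TensorAlgebra ℚ H) :
    commL x u = TensorAlgebra.ι ℚ x * u - u * TensorAlgebra.ι ℚ x := rfl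

def Lhs (x1 x2 : H) : TensorAlgebra ℚ H →ₗ[ℚ] A :=
  β ∘ₗ commL x1 ∘ₗ commL x2

def Rhs (x1 x2 : H) : TensorAlgebra ℚ H →ₗ[ℚ] A :=
  LinearMap.mulLeft ℚ (σ x1 * σ x2) ∘ₗ β
    + LinearMap.mulLeft ℚ ((2 * ω Y x2) • (σ Z * σ x1)) ∘ₗ (TensorAlgebra.lift ℚ σ).toLinearMap
    - LinearMap.mulLeft ℚ ((2 * ω Z x2) • (σ Y * σ x1)) ∘ₗ (TensorAlgebra.lift ℚ σ).toLinearMap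

lemma key_word (hβ : IsBeta ω σ Y Z β) (x1 x2 a c : H) (mid : List H) :
    Lhs β x1 x2 (word (a :: (mid ++ [c]))) = Rhs ω σ Y Z β x1 x2 (word (a :: (mid ++ [c]))) := by
  set w : List H := a :: (mid ++ [c]) with hw
  have e1 : commL x2 (word w) = word (x2 :: w) - word (w ++ [x2]) := by
    rw [commL_apply, ← word_cons, word_mul_ι]
  have lhs_eq : Lhs β x1 x2 (word w) =
      β (word (x1 :: x2 :: w)) - β (word ((x2 :: w) ++ [x1]))
      - β (word (x1 :: (w ++ [x2]))) + β (word ((w ++ [x2]) ++ [x1])) := by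
    simp only [Lhs, LinearMap.comp_apply, e1, commL_apply, mul_sub, sub_mul,
      ← word_cons, word_mul_ι, map_sub, map_add]
    abel
  have h1 := hβ x1 c (x2 :: a :: mid)
  have h2 := hβ x2 x1 (a :: (mid ++ [c]))
  have h3 := hβ x1 x2 (a :: (mid ++ [c]))
  have h4 := hβ a x1 (mid ++ [c, x2])
  have h5 := hβ a c mid
  simp only [List.cons_append, List.append_assoc, List.singleton_append,
    List.nil_append] at h1 h2 h3 h4 h5 ⊢
  rw [lhs_eq]
  simp only [hw, List.cons_append, List.append_assoc, List.singleton_append, List.nil_append]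
  rw [h1, h2, h3, h4]
  simp only [Rhs, LinearMap.sub_apply, LinearMap.add_apply, LinearMap.comp_apply,
    LinearMap.mulLeft_apply, AlgHom.toLinearMap_apply, Sym_word, h5]
  simp only [symword_cons, symword_append, symword_singleton, symword_nil]
  simp only [Algebra.smul_def, map_mul, map_ofNat]
  ring


lemma key_span (hβ : IsBeta ω σ Y Z β) (x1 x2 : H) {u : TensorAlgebra ℚ H}
    (hu : u ∈ Submodule.span ℚ (W2 (H := H))) :
    Lhs β x1 x2 u = Rhs ω σ Y Z β x1 x2 u := by
  refine LinearMap.eqOn_span (fun v hv => ?_) hu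
  obtain ⟨a, mid, c, rfl⟩ := hv
  exact key_word ω σ Y Z β hβ x1 x2 a c mid

end Key

/-- Lemma (Kawazumi–Kuno, Lemma on β, part (2)): if `m ≥ 4`, then
`β(Φ(X1 X2 X3 ⋯ Xm)) = X1X2 · β(Φ(X3 ⋯ Xm))` in `Sym^m(H)`, where on the right-hand
side `X1X2` multiplies `β(Φ(X3⋯Xm)) ∈ Sym^{m−2}(H)` inside the symmetric algebra.
Here the list `x1 :: x2 :: l` with `l.length ≥ 2` is the word `X1 X2 X3 ⋯ Xm`, `m ≥ 4`. -/
theorem stmt6 (ω : H →ₗ[ℚ] H →ₗ[ℚ] ℚ) (hω : ∀ x, ω x x = 0)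
    (σ : H →ₗ[ℚ] A) (Y Z : H)
    (β : TensorAlgebra ℚ H →ₗ[ℚ] A) (hβ : IsBeta ω σ Y Z β)
    (x1 x2 : H) (l : List H) (hl : 2 ≤ l.length) :
    β (dynkin (x1 :: x2 :: l)) = σ x1 * σ x2 * β (dynkin l) := by
  match l, hl with
  | y :: z :: t, _ =>
    have hmem := dynkin_mem_span t y z
    have h0 : TensorAlgebra.lift ℚ σ (dynkin (y :: z :: t)) = 0 := Sym_dynkin_zero σ y z t
    have hL : dynkin (x1 :: x2 :: y :: z :: t) = commL x1 (commL x2 (dynkin (y :: z :: t))) := by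
      simp only [dynkin_cons, commL_apply]
    calc β (dynkin (x1 :: x2 :: y :: z :: t))
        = Lhs β x1 x2 (dynkin (y :: z :: t)) := by rw [hL]; rfl
      _ = Rhs ω σ Y Z β x1 x2 (dynkin (y :: z :: t)) := key_span ω σ Y Z β hβ x1 x2 hmem
      _ = σ x1 * σ x2 * β (dynkin (y :: z :: t)) := by
          simp [Rhs, h0, mul_assoc]

end
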